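/- arXiv:2310.01380 — 2 statements merged into one kernel-verified Lean document; each statement's English description precedes it below -/
import Mathlib

section
/- Suboptimality decomposition for pessimistic value iteration: Consider a finite-horizon MDP with horizon H, Bellman operators T_h, and suppose functions f̃_h, b_h : S×A → ℝ and truncated pessimistic estimates f̂_h = max(0, min(H−h+1, f̃_h − b_h)) satisfy |[T_h f̂_{h+1}](s,a) − f̃_h(s,a)| ≤ b_h(s,a) for all h ∈ [H], (s,a), with f̂_{H+1} = 0. Let π̂ be greedy w.r.t. f̂_h. Then for every initial state s, V₁*(s) − V₁^{π̂}(s) ≤ 2 ∑_{h=1}^H E_{π*}[ b_h(s_h, a_h) | s₁ = s ], where the expectation is over trajectories of the optimal policy π*. -/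
open Finset

/-- A finite-horizon episodic MDP with finite state and action spaces, rewards in `[0,1]`
and transition probability mass functions. -/
structure FHMDP (S A : Type) (H : ℕ) [Fintype S] [Fintype A] where
  r : ℕ → S → A → ℝ
  P : ℕ → S → A → S → ℝ
  r_nonneg : ∀ h s a, 0 ≤ r h s a
  r_le_one : ∀ h s a, r h s a ≤ 1
  P_nonneg : ∀ h s a s', 0 ≤ P h s a s'
  P_sum_one : ∀ h s a, ∑ s', P h s a s' = 1

namespace FHMDP

variable {S A : Type} {H : ℕ} [Fintype S] [Fintype A] [Nonempty S] [Nonempty A]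

/-- Value function of policy `π` with `t` steps to go, i.e. `V^π_{H+1−t}`. -/
noncomputable def VpAux (M : FHMDP S A H) (π : ℕ → S → A) : ℕ → S → ℝ
  | 0, _ => 0
  | t + 1, s => M.r (H - t) s (π (H - t) s) +
      ∑ s', M.P (H - t) s (π (H - t) s) s' * VpAux M π t s'

/-- `V^π_h`. -/
noncomputable def Vp (M : FHMDP S A H) (π : ℕ → S → A) (h : ℕ) (s : S) : ℝ :=
  VpAux M π (H + 1 - h) s

/-- Optimal value function with `t` steps to go, i.e. `V*_{H+1−t}`. -/
noncomputable def VoptAux (M : FHMDP S A H) : ℕ → S → ℝ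
  | 0, _ => 0
  | t + 1, s => Finset.univ.sup' Finset.univ_nonempty fun a =>
      M.r (H - t) s a + ∑ s', M.P (H - t) s a s' * VoptAux M t s'

/-- `V*_h`. -/
noncomputable def Vopt (M : FHMDP S A H) (h : ℕ) (s : S) : ℝ :=
  VoptAux M (H + 1 - h) s

/-- Bellman operator `T_h` applied to an action-value function `g`:
`[T_h g](s,a) = r_h(s,a) + ∑_{s'} P_h(s'|s,a) max_{a'} g(s',a')`. -/
noncomputable def TQ (M : FHMDP S A H) (h : ℕ) (g : S → A → ℝ) (s : S) (a : A) : ℝ :=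
  M.r h s a + ∑ s', M.P h s a s' *
    (Finset.univ.sup' Finset.univ_nonempty fun a' => g s' a')

/-- Occupancy measure: `occAux M π s₁ t s` is the probability that the state at stage
`t + 1` equals `s`, for trajectories following `π` from initial state `s₁`. -/
noncomputable def occAux [DecidableEq S] (M : FHMDP S A H) (π : ℕ → S → A) (s₁ : S) : ℕ → S → ℝ
  | 0, s => if s = s₁ then 1 else 0
  | t + 1, s' => ∑ s, occAux M π s₁ t s * M.P (t + 1) s (π (t + 1) s) s'

end FHMDP


/-- Backward recursion for the accumulated pessimism error along `π`. -/
noncomputable def FHMDP.Err {S A : Type} {H : ℕ} [Fintype S] [Fintype A]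
    (M : FHMDP S A H) (π : ℕ → S → A) (b : ℕ → S → A → ℝ) : ℕ → S → ℝ
  | 0, _ => 0
  | t + 1, s => 2 * b (H - t) s (π (H - t) s) +
      ∑ s', M.P (H - t) s (π (H - t) s) s' * FHMDP.Err M π b t s'

/-- Regret decomposition for pessimistic value iteration: if the pessimistic estimates
`f̂_h = [f̃_h − b_h]_{[0,H−h+1]}` (with `f̂_{H+1} = 0`) satisfy
`|[T_h f̂_{h+1}](s,a) − f̃_h(s,a)| ≤ b_h(s,a)`, and `π̂` is greedy w.r.t. `f̂`, then
`V₁*(s) − V₁^{π̂}(s) ≤ 2 ∑_{h=1}^H E_{π*}[b_h(s_h, a_h) | s₁ = s]`. -/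
theorem pessimistic_VI_suboptimality {S A : Type} [Fintype S] [Fintype A] [DecidableEq S]
    [Nonempty S] [Nonempty A] {H : ℕ} (M : FHMDP S A H)
    (ftil b fhat : ℕ → S → A → ℝ)
    (hclip : ∀ h, 1 ≤ h → h ≤ H → ∀ s a,
      fhat h s a = max 0 (min ((H : ℝ) - h + 1) (ftil h s a - b h s a)))
    (hlast : ∀ s a, fhat (H + 1) s a = 0)
    (hbell : ∀ h, 1 ≤ h → h ≤ H → ∀ s a,
      |FHMDP.TQ M h (fhat (h + 1)) s a - ftil h s a| ≤ b h s a)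
    (πhat : ℕ → S → A)
    (hgreedy : ∀ h s a, fhat h s a ≤ fhat h s (πhat h s))
    (πstar : ℕ → S → A)
    (hopt : ∀ t s, FHMDP.VpAux M πstar t s = FHMDP.VoptAux M t s)
    (s : S) :
    FHMDP.Vopt M 1 s - FHMDP.Vp M πhat 1 s ≤
      2 * ∑ h ∈ Finset.Icc 1 H, ∑ s',
        FHMDP.occAux M πstar s (h - 1) s' * b h s' (πstar h s')  := by
  classical
  have hb0 : ∀ h, 1 ≤ h → h ≤ H → ∀ s a, 0 ≤ b h s a := fun h h1 hH s a =>
    le_trans (abs_nonneg _) (hbell h h1 hH s a)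
  have hf0 : ∀ h, 1 ≤ h → h ≤ H + 1 → ∀ s a, 0 ≤ fhat h s a := by
    intro h h1 hH s a
    rcases Nat.lt_or_ge h (H + 1) with hlt | hge
    · rw [hclip h h1 (by omega) s a]; exact le_max_left _ _
    · have : h = H + 1 := le_antisymm hH hge
      rw [this, hlast]
  have hfub : ∀ h, 1 ≤ h → h ≤ H + 1 → ∀ s a, fhat h s a ≤ (H : ℝ) - h + 1 := by
    intro h h1 hH s a
    rcases Nat.lt_or_ge h (H + 1) with hlt | hge
    · have hH' : h ≤ H := by omega
      rw [hclip h h1 hH' s a]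
      have hcast : (h : ℝ) ≤ H := by exact_mod_cast hH'
      exact max_le (by linarith) (min_le_left _ _)
    · have : h = H + 1 := le_antisymm hH hge
      subst this
      rw [hlast]
      push_cast
      linarith
  have hsupub : ∀ h, 1 ≤ h → h ≤ H → ∀ s' : S,
      (Finset.univ.sup' Finset.univ_nonempty fun a' => fhat (h + 1) s' a') ≤ (H : ℝ) - h := by
    intro h h1 hH s'
    refine Finset.sup'_le _ _ fun a' _ => ?_
    have := hfub (h + 1) (by omega) (by omega) s' a'
    push_cast at this
    linarith
  have hsup0 : ∀ h, 1 ≤ h → h ≤ H → ∀ s' : S,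
      (0 : ℝ) ≤ Finset.univ.sup' Finset.univ_nonempty fun a' => fhat (h + 1) s' a' := by
    intro h h1 hH s'
    obtain ⟨a0⟩ := ‹Nonempty A›
    exact le_trans (hf0 (h + 1) (by omega) (by omega) s' a0)
      (Finset.le_sup' _ (Finset.mem_univ a0))
  have hTub : ∀ h, 1 ≤ h → h ≤ H → ∀ s a,
      FHMDP.TQ M h (fhat (h + 1)) s a ≤ (H : ℝ) - h + 1 := by
    intro h h1 hH s a
    unfold FHMDP.TQ
    have hsum : ∑ s', M.P h s a s' *
        (Finset.univ.sup' Finset.univ_nonempty fun a' => fhat (h + 1) s' a') ≤ (H : ℝ) - h := by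
      calc ∑ s', M.P h s a s' *
            (Finset.univ.sup' Finset.univ_nonempty fun a' => fhat (h + 1) s' a')
          ≤ ∑ s', M.P h s a s' * ((H : ℝ) - h) :=
            Finset.sum_le_sum fun s' _ =>
              mul_le_mul_of_nonneg_left (hsupub h h1 hH s') (M.P_nonneg h s a s')
        _ = (H : ℝ) - h := by rw [← Finset.sum_mul, M.P_sum_one, one_mul]
    have hr := M.r_le_one h s a
    linarith
  have hT0 : ∀ h, 1 ≤ h → h ≤ H → ∀ s a, 0 ≤ FHMDP.TQ M h (fhat (h + 1)) s a := by
    intro h h1 hH s a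
    unfold FHMDP.TQ
    have hsum : (0 : ℝ) ≤ ∑ s', M.P h s a s' *
        (Finset.univ.sup' Finset.univ_nonempty fun a' => fhat (h + 1) s' a') :=
      Finset.sum_nonneg fun s' _ => mul_nonneg (M.P_nonneg h s a s') (hsup0 h h1 hH s')
    have hr := M.r_nonneg h s a
    linarith
  have hpess : ∀ h, 1 ≤ h → h ≤ H → ∀ s a,
      fhat h s a ≤ FHMDP.TQ M h (fhat (h + 1)) s a := by
    intro h h1 hH s a
    rw [hclip h h1 hH s a]
    have habs := hbell h h1 hH s a
    rw [abs_le] at habs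
    exact max_le (hT0 h h1 hH s a) (le_trans (min_le_right _ _) (by linarith [habs.1]))
  have hTlb : ∀ h, 1 ≤ h → h ≤ H → ∀ s a,
      FHMDP.TQ M h (fhat (h + 1)) s a - 2 * b h s a ≤ fhat h s a := by
    intro h h1 hH s a
    rw [hclip h h1 hH s a]
    have habs := hbell h h1 hH s a
    rw [abs_le] at habs
    have hb := hb0 h h1 hH s a
    have hub := hTub h h1 hH s a
    exact le_max_of_le_right (le_min (by linarith) (by linarith [habs.2]))
  -- Lemma A: the greedy value dominates the pessimistic estimate
  have hA : ∀ t, t ≤ H → ∀ s a, fhat (H + 1 - t) s a ≤ FHMDP.VpAux M πhat t s := by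
    intro t
    induction t with
    | zero =>
      intro _ s a
      simp [FHMDP.VpAux, hlast]
    | succ t ih =>
      intro ht s a
      have ht' : t ≤ H := by omega
      have h1 : 1 ≤ H - t := by omega
      have hhH : H - t ≤ H := by omega
      have e1 : H + 1 - (t + 1) = H - t := by omega
      have e2 : H + 1 - t = H - t + 1 := by omega
      rw [e1]
      have step : FHMDP.TQ M (H - t) (fhat (H - t + 1)) s (πhat (H - t) s) ≤
          FHMDP.VpAux M πhat (t + 1) s := by
        simp only [FHMDP.VpAux]
        unfold FHMDP.TQ
        apply add_le_add_right
        apply Finset.sum_le_sum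
        intro s' _
        refine mul_le_mul_of_nonneg_left ?_ (M.P_nonneg _ _ _ _)
        refine Finset.sup'_le _ _ fun a' _ => ?_
        have := ih ht' s' a'
        rwa [e2] at this
      exact le_trans (hgreedy (H - t) s a) (le_trans (hpess (H - t) h1 hhH s _) step)
  -- Lemma B: the optimal value is bounded by the estimate plus accumulated error
  have hB : ∀ t, t ≤ H → ∀ s : S, FHMDP.VoptAux M t s ≤
      (Finset.univ.sup' Finset.univ_nonempty fun a => fhat (H + 1 - t) s a) +
        FHMDP.Err M πstar b t s := by
    intro t
    induction t with
    | zero =>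
      intro _ s
      simp [FHMDP.VoptAux, FHMDP.Err, hlast]
    | succ t ih =>
      intro ht s
      have ht' : t ≤ H := by omega
      have h1 : 1 ≤ H - t := by omega
      have hhH : H - t ≤ H := by omega
      have e1 : H + 1 - (t + 1) = H - t := by omega
      have e2 : H + 1 - t = H - t + 1 := by omega
      rw [e1, ← hopt (t + 1) s]
      simp only [FHMDP.VpAux]
      calc M.r (H - t) s (πstar (H - t) s) + ∑ s', M.P (H - t) s (πstar (H - t) s) s' *
              FHMDP.VpAux M πstar t s'
          = M.r (H - t) s (πstar (H - t) s) + ∑ s', M.P (H - t) s (πstar (H - t) s) s' *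
              FHMDP.VoptAux M t s' := by simp only [hopt]
        _ ≤ M.r (H - t) s (πstar (H - t) s) + ∑ s', M.P (H - t) s (πstar (H - t) s) s' *
              ((Finset.univ.sup' Finset.univ_nonempty fun a => fhat (H + 1 - t) s' a) +
                FHMDP.Err M πstar b t s') := by
            apply add_le_add_right
            apply Finset.sum_le_sum
            intro s' _
            exact mul_le_mul_of_nonneg_left (ih ht' s') (M.P_nonneg _ _ _ _)
        _ = FHMDP.TQ M (H - t) (fhat (H - t + 1)) s (πstar (H - t) s) +
              ∑ s', M.P (H - t) s (πstar (H - t) s) s' * FHMDP.Err M πstar b t s' := by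
            unfold FHMDP.TQ
            rw [e2]
            simp only [mul_add, Finset.sum_add_distrib]
            ring
        _ ≤ (fhat (H - t) s (πstar (H - t) s) + 2 * b (H - t) s (πstar (H - t) s)) +
              ∑ s', M.P (H - t) s (πstar (H - t) s) s' * FHMDP.Err M πstar b t s' := by
            have := hTlb (H - t) h1 hhH s (πstar (H - t) s)
            linarith
        _ = fhat (H - t) s (πstar (H - t) s) + FHMDP.Err M πstar b (t + 1) s := by
            simp only [FHMDP.Err]
            ring
        _ ≤ (Finset.univ.sup' Finset.univ_nonempty fun a => fhat (H - t) s a) +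
              FHMDP.Err M πstar b (t + 1) s :=
            add_le_add_left (Finset.le_sup' _ (Finset.mem_univ _)) _
  -- Lemma D: forward unrolling of the error recursion into occupancy measures
  have hD : ∀ j, j ≤ H → FHMDP.Err M πstar b H s =
      (∑ h ∈ Finset.Icc 1 j, ∑ s', FHMDP.occAux M πstar s (h - 1) s' *
          (2 * b h s' (πstar h s'))) +
        ∑ s', FHMDP.occAux M πstar s j s' * FHMDP.Err M πstar b (H - j) s' := by
    intro j
    induction j with
    | zero =>
      intro _
      simp [FHMDP.occAux, ite_mul]
    | succ j ih =>
      intro hj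
      have hj' : j ≤ H := by omega
      have e : H - j = (H - (j + 1)) + 1 := by omega
      have e2 : H - (H - (j + 1)) = j + 1 := by omega
      have key : ∑ s', FHMDP.occAux M πstar s j s' * FHMDP.Err M πstar b (H - j) s' =
          (∑ s', FHMDP.occAux M πstar s ((j + 1) - 1) s' * (2 * b (j + 1) s' (πstar (j + 1) s')))
          + ∑ s', FHMDP.occAux M πstar s (j + 1) s' * FHMDP.Err M πstar b (H - (j + 1)) s' := by
        conv_lhs => rw [e]
        simp only [FHMDP.Err, e2, Nat.add_sub_cancel]
        simp only [mul_add, Finset.sum_add_distrib]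
        congr 1
        simp only [Finset.mul_sum, FHMDP.occAux, Finset.sum_mul, mul_assoc]
        exact Finset.sum_comm
      rw [ih hj', key, Finset.sum_Icc_succ_top (by omega : 1 ≤ j + 1)]
      ring
  -- Put everything together
  have hBH := hB H le_rfl s
  have hDH := hD H le_rfl
  have e1 : H + 1 - H = 1 := by omega
  rw [e1] at hBH
  have hsup : (Finset.univ.sup' Finset.univ_nonempty fun a => fhat 1 s a) ≤
      FHMDP.VpAux M πhat H s := by
    refine Finset.sup'_le _ _ fun a _ => ?_
    have := hA H le_rfl s a
    rwa [e1] at this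
  have hErr : FHMDP.Err M πstar b H s =
      2 * ∑ h ∈ Finset.Icc 1 H, ∑ s',
        FHMDP.occAux M πstar s (h - 1) s' * b h s' (πstar h s') := by
    rw [hDH, Nat.sub_self]
    simp only [FHMDP.Err, mul_zero, Finset.sum_const_zero, add_zero]
    rw [Finset.mul_sum]
    refine Finset.sum_congr rfl fun h _ => ?_
    rw [Finset.mul_sum]
    exact Finset.sum_congr rfl fun s' _ => by ring
  unfold FHMDP.Vopt FHMDP.Vp
  have eH : H + 1 - 1 = H := by omega
  rw [eH]
  linarith
end

section
/- One-step error recursion: In a finite-horizon MDP, let π̂_h be greedy w.r.t. f̂_h and suppose f̂_h(s,a) = [f̃_h(s,a) − b_h(s,a) − ε]_{[0,H−h+1]}, |f̃_h(s,a) − [T_h f̂_{h+1}](s,a)| ≤ b_h(s,a) + ε for all (s,a), and 0 ≤ V*_{h+1}(s') − f̂_{h+1}(s') ≤ R for all s'. Then for all s, 0 ≤ V*_h(s) − f̂_h(s) ≤ R + 2 max_{(s,a)} b_h(s,a) + 2ε, where f̂_h(s) = max_a f̂_h(s,a). -/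
open Finset

section Aux

variable {S A : Type} {H : ℕ} [Fintype S] [Fintype A] [Nonempty A]

lemma voptAux_nonneg' (M : FHMDP S A H) : ∀ t s, 0 ≤ M.VoptAux t s := by
  intro t
  induction t with
  | zero => intro s; simp [FHMDP.VoptAux]
  | succ t ih =>
    intro s
    rw [FHMDP.VoptAux]
    obtain ⟨a⟩ := ‹Nonempty A›
    refine le_trans ?_ (Finset.le_sup' _ (Finset.mem_univ a))
    have : 0 ≤ ∑ s', M.P (H - t) s a s' * M.VoptAux t s' :=
      Finset.sum_nonneg fun s' _ => mul_nonneg (M.P_nonneg _ _ _ _) (ih s')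
    have := M.r_nonneg (H - t) s a
    linarith

lemma voptAux_le' (M : FHMDP S A H) : ∀ t s, M.VoptAux t s ≤ t := by
  intro t
  induction t with
  | zero => intro s; simp [FHMDP.VoptAux]
  | succ t ih =>
    intro s
    rw [FHMDP.VoptAux]
    apply Finset.sup'_le
    intro a _
    have h1 : ∑ s', M.P (H - t) s a s' * M.VoptAux t s' ≤ ∑ s', M.P (H - t) s a s' * t :=
      Finset.sum_le_sum fun s' _ => mul_le_mul_of_nonneg_left (ih s') (M.P_nonneg _ _ _ _)
    have h2 : ∑ s', M.P (H - t) s a s' * (t:ℝ) = t := by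
      rw [← Finset.sum_mul, M.P_sum_one, one_mul]
    have := M.r_le_one (H - t) s a
    push_cast
    linarith

end Aux

/-- One-step error recursion: with `f̂_h = [f̃_h − b_h − ε]_{[0,H−h+1]}`,
`|f̃_h − T_h f̂_{h+1}| ≤ b_h + ε`, and `0 ≤ V*_{h+1} − f̂_{h+1} ≤ R` (where
`f̂(s) = max_a f̂(s,a)`), one has `0 ≤ V*_h(s) − f̂_h(s) ≤ R + 2 max_{(s,a)} b_h + 2ε`. -/
theorem one_step_error_recursion {S A : Type} [Fintype S] [Fintype A] [DecidableEq S]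
    [Nonempty S] [Nonempty A] {H : ℕ} (M : FHMDP S A H)
    (h : ℕ) (hh1 : 1 ≤ h) (hhH : h ≤ H)
    (fh fnext ftil : S → A → ℝ) (b : S → A → ℝ) (hb : ∀ s a, 0 ≤ b s a)
    (ε R : ℝ) (hε : 0 ≤ ε) (hR : 0 ≤ R)
    (hclip : ∀ s a, fh s a = max 0 (min ((H : ℝ) - h + 1) (ftil s a - b s a - ε)))
    (hbell : ∀ s a, |ftil s a - FHMDP.TQ M h fnext s a| ≤ b s a + ε)
    (hsand : ∀ s' : S,
      0 ≤ FHMDP.Vopt M (h + 1) s' -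
            (Finset.univ.sup' Finset.univ_nonempty fun a => fnext s' a) ∧
      FHMDP.Vopt M (h + 1) s' -
            (Finset.univ.sup' Finset.univ_nonempty fun a => fnext s' a) ≤ R) :
    ∀ s : S,
      0 ≤ FHMDP.Vopt M h s -
            (Finset.univ.sup' Finset.univ_nonempty fun a => fh s a) ∧
      FHMDP.Vopt M h s - (Finset.univ.sup' Finset.univ_nonempty fun a => fh s a) ≤
        R + 2 * (Finset.univ.sup' Finset.univ_nonempty fun sa : S × A => b sa.1 sa.2)
          + 2 * ε := by
  -- Notation and Bellman unfolding for Vopt at step h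
  have e1 : H + 1 - h = (H - h) + 1 := by omega
  have e2 : H - (H - h) = h := by omega
  have e3 : H + 1 - (h + 1) = H - h := by omega
  have key : ∀ s : S, FHMDP.Vopt M h s = Finset.univ.sup' Finset.univ_nonempty
      fun a => M.r h s a + ∑ s', M.P h s a s' * FHMDP.Vopt M (h + 1) s' := by
    intro s
    simp only [FHMDP.Vopt, e1, e3, FHMDP.VoptAux, e2]
  -- bounds on Vopt (h+1)
  have hVnn : ∀ s' : S, 0 ≤ FHMDP.Vopt M (h + 1) s' := fun s' => voptAux_nonneg' M _ s'
  have hVle : ∀ s' : S, FHMDP.Vopt M (h + 1) s' ≤ (H : ℝ) - h := by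
    intro s'
    have h1 := voptAux_le' M (H - h) s'
    have h2 : ((H - h : ℕ) : ℝ) = (H : ℝ) - h := by
      push_cast [Nat.cast_sub hhH]; ring
    simp only [FHMDP.Vopt, e3]
    linarith
  -- abbreviations
  set Fnext : S → ℝ := fun s' => Finset.univ.sup' Finset.univ_nonempty fun a => fnext s' a
    with hFnext
  set Q : S → A → ℝ := fun s a => M.r h s a + ∑ s', M.P h s a s' * FHMDP.Vopt M (h + 1) s'
    with hQ
  have hQnn : ∀ s a, 0 ≤ Q s a := by
    intro s a
    have : 0 ≤ ∑ s', M.P h s a s' * FHMDP.Vopt M (h + 1) s' :=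
      Finset.sum_nonneg fun s' _ => mul_nonneg (M.P_nonneg _ _ _ _) (hVnn s')
    have := M.r_nonneg h s a
    simp only [hQ]; linarith
  have hQle : ∀ s a, Q s a ≤ (H : ℝ) - h + 1 := by
    intro s a
    have h1 : ∑ s', M.P h s a s' * FHMDP.Vopt M (h + 1) s' ≤
        ∑ s', M.P h s a s' * ((H : ℝ) - h) :=
      Finset.sum_le_sum fun s' _ => mul_le_mul_of_nonneg_left (hVle s') (M.P_nonneg _ _ _ _)
    have h2 : ∑ s', M.P h s a s' * ((H : ℝ) - h) = (H : ℝ) - h := by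
      rw [← Finset.sum_mul, M.P_sum_one, one_mul]
    have := M.r_le_one h s a
    simp only [hQ]; linarith
  -- Q vs TQ fnext
  have hTQQ : ∀ s a, FHMDP.TQ M h fnext s a ≤ Q s a := by
    intro s a
    simp only [FHMDP.TQ, hQ]
    have h1 : ∑ s', M.P h s a s' * Fnext s' ≤ ∑ s', M.P h s a s' * FHMDP.Vopt M (h + 1) s' :=
      Finset.sum_le_sum fun s' _ => mul_le_mul_of_nonneg_left
        (by linarith [(hsand s').1]) (M.P_nonneg _ _ _ _)
    linarith
  have hQTQ : ∀ s a, Q s a ≤ FHMDP.TQ M h fnext s a + R := by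
    intro s a
    simp only [FHMDP.TQ, hQ]
    have h1 : ∑ s', M.P h s a s' * FHMDP.Vopt M (h + 1) s' ≤
        ∑ s', M.P h s a s' * (Fnext s' + R) :=
      Finset.sum_le_sum fun s' _ => mul_le_mul_of_nonneg_left
        (by linarith [(hsand s').2]) (M.P_nonneg _ _ _ _)
    have h2 : ∑ s', M.P h s a s' * (Fnext s' + R) =
        (∑ s', M.P h s a s' * Fnext s') + R := by
      simp only [mul_add, Finset.sum_add_distrib, ← Finset.sum_mul, M.P_sum_one, one_mul]
    linarith
  -- bmax bound
  set bmax : ℝ := Finset.univ.sup' Finset.univ_nonempty fun sa : S × A => b sa.1 sa.2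
    with hbmax
  have hble : ∀ s a, b s a ≤ bmax := fun s a =>
    Finset.le_sup' (f := fun sa : S × A => b sa.1 sa.2) (Finset.mem_univ (s, a))
  have hbmaxnn : 0 ≤ bmax := (hb _ _).trans (hble (Classical.arbitrary S) (Classical.arbitrary A))
  intro s
  rw [key s]
  have hsupQ : (Finset.univ.sup' Finset.univ_nonempty fun a => M.r h s a +
      ∑ s', M.P h s a s' * FHMDP.Vopt M (h + 1) s') =
      Finset.univ.sup' Finset.univ_nonempty fun a => Q s a := rfl
  rw [hsupQ]
  constructor
  · -- lower bound: sup fh ≤ sup Q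
    rw [sub_nonneg]
    apply Finset.sup'_le
    intro a _
    refine le_trans ?_ (Finset.le_sup' (fun a => Q s a) (Finset.mem_univ a))
    rw [hclip s a]
    apply max_le (hQnn s a)
    refine le_trans (min_le_right _ _) ?_
    have hb2 := (abs_le.mp (hbell s a)).2
    have := hTQQ s a
    linarith
  · -- upper bound
    rw [sub_le_iff_le_add]
    apply Finset.sup'_le
    intro a _
    have hfa : fh s a ≤ Finset.univ.sup' Finset.univ_nonempty fun a => fh s a :=
      Finset.le_sup' _ (Finset.mem_univ a)
    have : Q s a ≤ fh s a + (R + 2 * bmax + 2 * ε) := by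
      rw [hclip s a]
      rcases le_or_gt ((H : ℝ) - h + 1) (ftil s a - b s a - ε) with hc | hc
      · have : max 0 (min ((H : ℝ) - h + 1) (ftil s a - b s a - ε)) = (H : ℝ) - h + 1 := by
          rw [min_eq_left hc, max_eq_right]
          have : (0:ℝ) ≤ (H:ℝ) - h := by
            have : (h:ℝ) ≤ (H:ℝ) := by exact_mod_cast hhH
            linarith
          linarith
        rw [this]
        have := hQle s a
        have := hble s a
        have := hb s a
        linarith
      · have hge : ftil s a - b s a - ε ≤
            max 0 (min ((H : ℝ) - h + 1) (ftil s a - b s a - ε)) := by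
          rw [min_eq_right hc.le]
          exact le_max_right _ _
        have hb1 := (abs_le.mp (hbell s a)).1
        have := hQTQ s a
        have := hble s a
        linarith
    linarith
end
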